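/- For every summable f : ℤ → ℝ, every T > 0 and every x ∈ ℤ, P_T(f²)(x) − (P_T f(x))² = ∫₀^T P_u( |∇(P_{T−u} f)|² )(x) du. -/

import Mathlib

open MeasureTheory Real

/-- The kernel `K_s` of the fractional discrete Laplacian on `ℤ`. -/
noncomputable def Ker (s : ℝ) (m : ℤ) : ℝ :=
  if m = 0 then 0
  else ((4 : ℝ) ^ s * Real.Gamma (1 / 2 + s) / (Real.sqrt Real.pi * |Real.Gamma (-s)|)) *
    (Real.Gamma ((m.natAbs : ℝ) - s) / Real.Gamma ((m.natAbs : ℝ) + 1 + s))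

/-- The fractional discrete Laplacian `L = (-Δ)^s` acting pointwise. -/
noncomputable def Lop (s : ℝ) (f : ℤ → ℝ) : ℤ → ℝ :=
  fun x => ∑' y : ℤ, (f x - f y) * Ker s (x - y)

/-- The heat semigroup `P_t = exp (-t L)`, given by the exponential series of the
bounded operator `-tL` (evaluated pointwise). -/
noncomputable def heat (s t : ℝ) (f : ℤ → ℝ) : ℤ → ℝ :=
  fun x => ∑' n : ℕ, ((-t) ^ n / (n.factorial : ℝ)) * ((Lop s)^[n] f x)

/-- The squared modulus of the gradient, `|∇f|²(x) = Σ_y K_s(y-x) (f x - f y)²`. -/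
noncomputable def gradSq (s : ℝ) (f : ℤ → ℝ) (x : ℤ) : ℝ :=
  ∑' y : ℤ, Ker s (y - x) * (f x - f y) ^ 2

/-- The squared modulus of the modified gradient,
`|∇̃f|²(x) = Σ_{y : |f y| < |f x|} K_s(y-x) (f x - f y)²`. -/
noncomputable def mgradSq (s : ℝ) (f : ℤ → ℝ) (x : ℤ) : ℝ :=
  ∑' y : {y : ℤ // |f y| < |f x|}, Ker s ((y : ℤ) - x) * (f x - f (y : ℤ)) ^ 2

/-- The `ℓ^q` norm on `ℤ` with counting measure (for finite `q`). -/
noncomputable def lqNorm (q : ℝ) (f : ℤ → ℝ) : ℝ :=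
  (∑' x : ℤ, |f x| ^ q) ^ (1 / q)

/-!
Both sides are the values at the endpoints of `F u = P_u ((P_{T-u} f)²)(x)` on `[0, T]`.
Since `L` is bounded on `ℓ¹(ℤ)`, `u ↦ P_u = exp (-uL)` is differentiable in operator norm, and
the product rule gives `F' u = P_u (Γ (P_{T-u} f))(x)` with `Γ g = 2 g Lg - L (g²)`. Expanding the
sums, `Γ g = |∇g|²` pointwise because `K_s` is even, and the fundamental theorem of calculus
concludes. That `K_s` is summable follows by telescoping, from the Gamma function identity
`Γ(a-s)/Γ(a+1+s) = (Γ(a-s)/Γ(a+s) - Γ(a+1-s)/Γ(a+1+s)) / (2s)`.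
-/

open NormedSpace
open scoped lp ENNReal

section CarreDuChamp

variable {E : Type*} [NormedAddCommGroup E] [NormedSpace ℝ E] [CompleteSpace E]

-- Twice the usual carré du champ of the generator `B`; with this normalisation it is `|∇g|²`.
noncomputable def carreDuChamp (B : E →L[ℝ] E) (m : E →L[ℝ] E →L[ℝ] E) (g : E) : E :=
  B (m g g) - m g (B g) - m (B g) g

variable (B : E →L[ℝ] E) (m : E →L[ℝ] E →L[ℝ] E)

omit [CompleteSpace E] in
lemma continuous_carreDuChamp : Continuous (carreDuChamp B m) := by
  unfold carreDuChamp
  fun_prop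

lemma hasDerivAt_exp_smul_apply (f : E) (t : ℝ) :
    HasDerivAt (fun t : ℝ => exp (t • B) f) (B (exp (t • B) f)) t := by
  simpa using (hasDerivAt_exp_smul_const' B t).clm_apply (hasDerivAt_const t f)

lemma continuous_exp_smul_apply {w : ℝ → E} (hw : Continuous w) :
    Continuous fun t : ℝ => exp (t • B) (w t) :=
  (differentiable_exp_smul_const ℝ B).continuous.clm_apply hw

lemma continuous_exp_smul_apply_carreDuChamp (f : E) (T : ℝ) :
    Continuous fun u : ℝ => exp (u • B) (carreDuChamp B m (exp ((T - u) • B) f)) :=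
  continuous_exp_smul_apply B <| (continuous_carreDuChamp B m).comp <|
    (continuous_exp_smul_apply B continuous_const).comp (continuous_const.sub continuous_id)

theorem exp_smul_apply_sub_eq_integral_carreDuChamp (f : E) (T : ℝ) :
    exp (T • B) (m f f) - m (exp (T • B) f) (exp (T • B) f) =
      ∫ u in (0 : ℝ)..T, exp (u • B) (carreDuChamp B m (exp ((T - u) • B) f)) := by
  set v : ℝ → E := fun u => exp ((T - u) • B) f
  have hv : ∀ u, HasDerivAt v (-B (v u)) u := fun u => by
    have h := (hasDerivAt_exp_smul_apply B f (T - u)).scomp u ((hasDerivAt_id u).const_sub T)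
    simpa [v, Function.comp_def] using h
  have hF : ∀ u, HasDerivAt (fun u => exp (u • B) (m (v u) (v u)))
      (exp (u • B) (carreDuChamp B m (v u))) u := fun u => by
    have hm := (m.hasFDerivAt.comp_hasDerivAt u (hv u)).clm_apply (hv u)
    refine ((hasDerivAt_exp_smul_const B u).clm_apply hm).congr_deriv ?_
    rw [mul_apply_eq_comp, ← map_add]
    simp only [carreDuChamp, Function.comp_apply, map_neg, neg_apply]
    congr 1
    abel
  rw [intervalIntegral.integral_eq_sub_of_hasDerivAt (fun u _ => hF u)
    ((continuous_exp_smul_apply_carreDuChamp B m f T).intervalIntegrable _ _)]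
  simp [v]

end CarreDuChamp

section LOne

variable {α : Type*}

lemma memℓp_one_iff_summable {f : α → ℝ} : Memℓp f 1 ↔ Summable f := by
  rw [memℓp_gen_iff (by norm_num)]
  simp [summable_abs_iff]

lemma summable_abs_lpOne (g : ℓ¹(α, ℝ)) : Summable fun x => |g x| :=
  (memℓp_one_iff_summable.1 g.2).abs

lemma norm_lpOne_eq_tsum_abs (g : ℓ¹(α, ℝ)) : ‖g‖ = ∑' x, |g x| := by
  simp [lp.norm_eq_tsum_rpow (by norm_num : 0 < (1 : ℝ≥0∞).toReal) g]

lemma abs_apply_le_norm_lpOne (g : ℓ¹(α, ℝ)) (x : α) : |g x| ≤ ‖g‖ :=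
  lp.norm_apply_le_norm one_ne_zero g x

lemma norm_lpOne_le_of_abs_le {f : α → ℝ} (hf : Memℓp f 1) {b : α → ℝ} (hb : Summable b)
    (hfb : ∀ x, |f x| ≤ b x) : ‖(⟨f, hf⟩ : ℓ¹(α, ℝ))‖ ≤ ∑' x, b x := by
  rw [norm_lpOne_eq_tsum_abs]
  exact (memℓp_one_iff_summable.1 hf).abs.tsum_le_tsum hfb hb

lemma memℓp_one_mul (g h : ℓ¹(α, ℝ)) : Memℓp (⇑g * ⇑h) 1 :=
  memℓp_one_iff_summable.2 <| .of_norm_bounded ((summable_abs_lpOne g).mul_right ‖h‖)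
    fun x => by
      rw [Pi.mul_apply, norm_mul, Real.norm_eq_abs, Real.norm_eq_abs]
      exact mul_le_mul_of_nonneg_left (abs_apply_le_norm_lpOne h x) (abs_nonneg _)

noncomputable def pointwiseMul : ℓ¹(α, ℝ) →L[ℝ] ℓ¹(α, ℝ) →L[ℝ] ℓ¹(α, ℝ) :=
  LinearMap.mkContinuous₂
    (LinearMap.mk₂ ℝ (fun g h => ⟨⇑g * ⇑h, memℓp_one_mul g h⟩)
      (fun _ _ _ => lp.ext <| funext fun _ => add_mul _ _ _)
      (fun c g h => lp.ext <| funext fun x => smul_mul_assoc c (g x) (h x))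
      (fun _ _ _ => lp.ext <| funext fun _ => mul_add _ _ _)
      (fun c g h => lp.ext <| funext fun x => mul_smul_comm c (g x) (h x)))
    1 fun g h => by
      rw [one_mul, norm_lpOne_eq_tsum_abs g, ← tsum_mul_right]
      refine norm_lpOne_le_of_abs_le _ ((summable_abs_lpOne g).mul_right _) fun x => ?_
      rw [Pi.mul_apply, abs_mul]
      exact mul_le_mul_of_nonneg_left (abs_apply_le_norm_lpOne h x) (abs_nonneg _)

lemma pointwiseMul_apply (g h : ℓ¹(α, ℝ)) (x : α) : pointwiseMul g h x = g x * h x := by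
  simp [pointwiseMul]

end LOne

section JumpOperator

variable {G : Type*} [AddGroup G]

lemma hasSum_tsum_mul_sub {a b : G → ℝ} (ha : Summable a) (hb : Summable b) :
    HasSum (fun x => ∑' y, a (x - y) * b y) ((∑' m, a m) * ∑' m, b m) := by
  let e : G × G ≃ G × G :=
    { toFun := fun p => (p.1 - p.2, p.2)
      invFun := fun p => (p.1 + p.2, p.2)
      left_inv := fun p => by simp
      right_inv := fun p => by simp }
  have hprod : HasSum (fun p : G × G => a (p.1 - p.2) * b p.2) ((∑' m, a m) * ∑' m, b m) := by
    rw [tsum_mul_tsum_of_summable_norm ha.norm hb.norm]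
    exact e.hasSum_iff.2 (summable_mul_of_summable_norm ha.norm hb.norm).hasSum
  exact hprod.prod_fiberwise fun x => (hprod.summable.prod_factor x).hasSum

noncomputable def jumpOp (K : G → ℝ) (f : G → ℝ) (x : G) : ℝ := ∑' y, (f x - f y) * K (x - y)

variable {K : G → ℝ}

lemma tsum_kernel_sub (x : G) : ∑' y, K (x - y) = ∑' m, K m :=
  (Equiv.subLeft x).tsum_eq K

variable (hK : Summable K)
include hK

lemma summable_kernel_sub (x : G) : Summable fun y => K (x - y) :=
  (Equiv.subLeft x).summable_iff.2 hK

lemma summable_kernel_sub_mul (g : ℓ¹(G, ℝ)) (x : G) : Summable fun y => K (x - y) * g y :=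
  .of_norm_bounded ((summable_kernel_sub hK x).abs.mul_right ‖g‖) fun y => by
    rw [norm_mul, Real.norm_eq_abs, Real.norm_eq_abs]
    exact mul_le_mul_of_nonneg_left (abs_apply_le_norm_lpOne g y) (abs_nonneg _)

lemma abs_tsum_kernel_sub_mul_le (g : ℓ¹(G, ℝ)) (x : G) :
    |∑' y, K (x - y) * g y| ≤ ∑' y, |K (x - y)| * |g y| := by
  simpa only [Real.norm_eq_abs, abs_mul] using
    norm_tsum_le_tsum_norm (summable_kernel_sub_mul hK g x).norm

lemma memℓp_one_convolution (g : ℓ¹(G, ℝ)) : Memℓp (fun x => ∑' y, K (x - y) * g y) 1 :=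
  memℓp_one_iff_summable.2 <| .of_norm_bounded
    (hasSum_tsum_mul_sub hK.abs (summable_abs_lpOne g)).summable (abs_tsum_kernel_sub_mul_le hK g)

noncomputable def convolutionCLM : ℓ¹(G, ℝ) →L[ℝ] ℓ¹(G, ℝ) :=
  LinearMap.mkContinuous
    { toFun := fun g => ⟨fun x => ∑' y, K (x - y) * g y, memℓp_one_convolution hK g⟩
      map_add' := fun g h => lp.ext <| funext fun x => by
        simp only [lp.coeFn_add, Pi.add_apply, mul_add]
        exact (summable_kernel_sub_mul hK g x).tsum_add (summable_kernel_sub_mul hK h x)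
      map_smul' := fun c g => lp.ext <| funext fun x => by
        simp only [lp.coeFn_smul, Pi.smul_apply, smul_eq_mul, RingHom.id_apply, mul_left_comm _ c]
        exact tsum_mul_left }
    (∑' m, |K m|) fun g => by
      rw [norm_lpOne_eq_tsum_abs g, ← (hasSum_tsum_mul_sub hK.abs (summable_abs_lpOne g)).tsum_eq]
      exact norm_lpOne_le_of_abs_le _ (hasSum_tsum_mul_sub hK.abs (summable_abs_lpOne g)).summable
        (abs_tsum_kernel_sub_mul_le hK g)

lemma convolutionCLM_apply (g : ℓ¹(G, ℝ)) (x : G) :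
    convolutionCLM hK g x = ∑' y, K (x - y) * g y := by
  simp [convolutionCLM]

noncomputable def jumpOperator : ℓ¹(G, ℝ) →L[ℝ] ℓ¹(G, ℝ) :=
  (∑' m, K m) • ContinuousLinearMap.id ℝ _ - convolutionCLM hK

lemma jumpOperator_apply (g : ℓ¹(G, ℝ)) (x : G) : jumpOperator hK g x = jumpOp K g x := by
  have hsplit : jumpOp K g x = g x * ∑' y, K (x - y) - ∑' y, K (x - y) * g y := by
    rw [← tsum_mul_left, ← ((summable_kernel_sub hK x).mul_left (g x)).tsum_sub
      (summable_kernel_sub_mul hK g x)]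
    exact tsum_congr fun y => by ring
  rw [hsplit, tsum_kernel_sub, jumpOperator, sub_apply, lp.coeFn_sub, Pi.sub_apply,
    convolutionCLM_apply]
  simp [mul_comm]

lemma coe_jumpOperator_pow_apply (n : ℕ) (g : ℓ¹(G, ℝ)) :
    ⇑((jumpOperator hK ^ n) g) = (jumpOp K)^[n] g := by
  induction n generalizing g with
  | zero => rfl
  | succ n ih =>
    rw [pow_succ, mul_apply_eq_comp, ih, Function.iterate_succ_apply,
      funext (jumpOperator_apply hK g)]

lemma summable_jump_term (g : ℓ¹(G, ℝ)) (x : G) : Summable fun y => (g x - g y) * K (x - y) :=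
  (((summable_kernel_sub hK x).mul_left (g x)).sub (summable_kernel_sub_mul hK g x)).congr
    fun y => by ring

lemma exp_smul_neg_jumpOperator_apply (t : ℝ) (g : ℓ¹(G, ℝ)) (x : G) :
    exp (t • -jumpOperator hK) g x = ∑' n : ℕ, (-t) ^ n / n.factorial * (jumpOp K)^[n] g x := by
  let ψ : (ℓ¹(G, ℝ) →L[ℝ] ℓ¹(G, ℝ)) →L[ℝ] ℝ :=
    (lp.evalCLM ℝ (fun _ => ℝ) 1 x).comp (ContinuousLinearMap.apply ℝ _ g)
  change ψ (exp (t • -jumpOperator hK)) = _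
  rw [exp_eq_tsum ℝ, ψ.map_tsum (expSeries_summable' _)]
  refine tsum_congr fun n => ?_
  rw [smul_neg, ← neg_smul, smul_pow, smul_smul, ← coe_jumpOperator_pow_apply hK n g]
  simp [ψ, lp.evalCLM, div_eq_inv_mul]

lemma carreDuChamp_neg_jumpOperator_apply (g : ℓ¹(G, ℝ)) (x : G) :
    carreDuChamp (-jumpOperator hK) pointwiseMul g x = ∑' y, (g x - g y) ^ 2 * K (x - y) := by
  have hsq := summable_jump_term hK (pointwiseMul g g) x
  simp only [pointwiseMul_apply] at hsq
  have hexpand : ∑' y, (g x - g y) ^ 2 * K (x - y) =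
      2 * g x * jumpOp K g x - jumpOp K (pointwiseMul g g) x := by
    simp only [jumpOp, pointwiseMul_apply]
    rw [← tsum_mul_left, ← ((summable_jump_term hK g x).mul_left _).tsum_sub hsq]
    exact tsum_congr fun y => by ring
  rw [hexpand, carreDuChamp]
  simp only [lp.coeFn_sub, Pi.sub_apply, pointwiseMul_apply, neg_apply,
    lp.coeFn_neg, Pi.neg_apply, jumpOperator_apply]
  ring

end JumpOperator

section FractionalKernel

lemma summable_of_nonneg_of_eq_sub_succ {f d : ℕ → ℝ} (hf : ∀ n, 0 ≤ f n) (hd : ∀ n, 0 ≤ d n)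
    (hfd : ∀ n, f n = d n - d (n + 1)) : Summable f :=
  summable_of_sum_range_le hf fun N => by
    rw [Finset.sum_congr rfl fun n _ => hfd n, Finset.sum_range_sub']
    linarith [hd N]

lemma Gamma_sub_div_Gamma_add_one_add {s a : ℝ} (hs : 0 < s) (ha : s < a) :
    Gamma (a - s) / Gamma (a + 1 + s) =
      (Gamma (a - s) / Gamma (a + s) - Gamma (a + 1 - s) / Gamma (a + 1 + s)) / (2 * s) := by
  have hsub : Gamma (a + 1 - s) = (a - s) * Gamma (a - s) := by
    rw [show a + 1 - s = a - s + 1 by ring, Gamma_add_one (sub_pos.2 ha).ne']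
  have hadd : Gamma (a + 1 + s) = (a + s) * Gamma (a + s) := by
    rw [show a + 1 + s = a + s + 1 by ring, Gamma_add_one (by linarith)]
  have hpos : 0 < Gamma (a + s) := Gamma_pos_of_pos (by linarith)
  have hne : a + s ≠ 0 := (show 0 < a + s by linarith).ne'
  rw [hsub, hadd]
  field_simp
  ring

lemma ker_neg (s : ℝ) (m : ℤ) : Ker s (-m) = Ker s m := by
  simp [Ker]

variable {s : ℝ} (hs : s ∈ Set.Ioo (0 : ℝ) 1)
include hs

lemma ker_nonneg (m : ℤ) : 0 ≤ Ker s m := by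
  obtain ⟨hs0, hs1⟩ := hs
  unfold Ker
  split_ifs with hm
  · rfl
  · have h1 : (1 : ℝ) ≤ m.natAbs := by exact_mod_cast Int.natAbs_pos.2 hm
    have := Gamma_pos_of_pos (show 0 < 1 / 2 + s by linarith)
    have := Gamma_pos_of_pos (show 0 < (m.natAbs : ℝ) - s by linarith)
    have := Gamma_pos_of_pos (show 0 < (m.natAbs : ℝ) + 1 + s by linarith)
    positivity

lemma summable_ker_natCast : Summable fun n : ℕ => Ker s n := by
  set c := (4 : ℝ) ^ s * Gamma (1 / 2 + s) / (√π * |Gamma (-s)|)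
  have hc : 0 ≤ c := by
    have := Gamma_pos_of_pos (show 0 < 1 / 2 + s by linarith [hs.1])
    positivity
  let d : ℕ → ℝ := fun n => c / (2 * s) * (Gamma (n + 1 - s) / Gamma (n + 1 + s))
  refine (summable_nat_add_iff 1).1 <| summable_of_nonneg_of_eq_sub_succ (d := d)
    (fun n => ker_nonneg hs _) (fun n => ?_) (fun n => ?_)
  · have := Gamma_pos_of_pos (show 0 < (n : ℝ) + 1 - s by linarith [hs.2, n.cast_nonneg (α := ℝ)])
    have := Gamma_pos_of_pos (show 0 < (n : ℝ) + 1 + s by linarith [hs.1, n.cast_nonneg (α := ℝ)])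
    have := hs.1
    positivity
  · have hker : Ker s ((n + 1 : ℕ) : ℤ) = c * (Gamma (n + 1 - s) / Gamma (n + 1 + 1 + s)) := by
      rw [Ker, if_neg (by omega), Int.natAbs_natCast]
      push_cast
      ring
    rw [hker, Gamma_sub_div_Gamma_add_one_add hs.1 (by linarith [hs.2, n.cast_nonneg (α := ℝ)])]
    simp only [d]
    push_cast
    ring

lemma summable_ker : Summable (Ker s) :=
  .of_nat_of_neg (summable_ker_natCast hs) (by simpa only [ker_neg] using summable_ker_natCast hs)

lemma heat_eq_exp (t : ℝ) (g : ℓ¹(ℤ, ℝ)) :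
    heat s t g = exp (t • -jumpOperator (summable_ker hs)) g :=
  funext fun x => (exp_smul_neg_jumpOperator_apply _ t g x).symm

lemma gradSq_eq_carreDuChamp (g : ℓ¹(ℤ, ℝ)) :
    gradSq s g = carreDuChamp (-jumpOperator (summable_ker hs)) pointwiseMul g :=
  funext fun x => by
    rw [carreDuChamp_neg_jumpOperator_apply]
    exact tsum_congr fun y => by rw [← neg_sub x y, ker_neg, mul_comm]

end FractionalKernel

theorem heat_variance_identity_general (s : ℝ) (hs : s ∈ Set.Ioo (0 : ℝ) 1) (f : ℤ → ℝ)
    (hf : Summable f) (T : ℝ) (x : ℤ) :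
    heat s T (fun y => f y ^ 2) x - (heat s T f x) ^ 2 =
      ∫ u in (0 : ℝ)..T, heat s u (fun z => gradSq s (heat s (T - u) f) z) x := by
  set B := -jumpOperator (summable_ker hs)
  let fE : ℓ¹(ℤ, ℝ) := ⟨f, memℓp_one_iff_summable.2 hf⟩
  have hsq : (fun y => f y ^ 2) = ⇑(pointwiseMul fE fE) :=
    funext fun y => by rw [pointwiseMul_apply, sq]
  have hintegrand : ∀ u, heat s u (fun z => gradSq s (heat s (T - u) f) z) x =
      lp.evalCLM ℝ (fun _ => ℝ) 1 x
        (exp (u • B) (carreDuChamp B pointwiseMul (exp ((T - u) • B) fE))) := fun u => by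
    change heat s u (gradSq s (heat s (T - u) fE)) x = _
    rw [heat_eq_exp hs (T - u), gradSq_eq_carreDuChamp hs, heat_eq_exp hs]
    rfl
  have key := congrArg (lp.evalCLM ℝ (fun _ => ℝ) 1 x)
    (exp_smul_apply_sub_eq_integral_carreDuChamp B pointwiseMul fE T)
  rw [← ContinuousLinearMap.intervalIntegral_comp_comm _
    ((continuous_exp_smul_apply_carreDuChamp B pointwiseMul fE T).intervalIntegrable 0 T)] at key
  convert key using 1
  · change heat s T (fun y => fE y ^ 2) x - heat s T fE x ^ 2 = _
    rw [hsq, heat_eq_exp hs, heat_eq_exp hs, map_sub, sq]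
    rfl
  · exact intervalIntegral.integral_congr fun u _ => hintegrand u

/-- Variance identity for the heat semigroup:
`P_T(f²)(x) - (P_T f x)² = ∫₀^T P_u (|∇ P_{T-u} f|²)(x) du`. -/
theorem heat_variance_identity (s : ℝ) (hs : s ∈ Set.Ioo (0 : ℝ) 1) (f : ℤ → ℝ)
    (hf : Summable f) (T : ℝ) (hT : 0 < T) (x : ℤ) :
    heat s T (fun y => f y ^ 2) x - (heat s T f x) ^ 2 =
      ∫ u in (0 : ℝ)..T, heat s u (fun z => gradSq s (heat s (T - u) f) z) x :=
  heat_variance_identity_general s hs f hf T x
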